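/- For arbitrary real 3×3 matrices f₊₊, f₊₋, f₋₊, f₋₋, the signature-density contraction of the tensor R_{abcd} satisfies Σ_{a,b,e,f,g,h=1}^{4} ε_{efgh} R_{abef} R_{abgh} = 32 ( ‖f₊₊‖² + ‖f₋₊‖² − ‖f₊₋‖² − ‖f₋₋‖² ), where ε is the four-index Levi-Civita symbol with ε_{1234} = 1 and ‖f‖² = Σ_{i,j} (f^{ij})² denotes the squared Frobenius norm. In particular, if f₊₋ equals the transpose of f₋₊, the right-hand side equals 32 ( ‖f₊₊‖² − ‖f₋₋‖² ). -/

import Mathlib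

/-!
Both families of 't Hooft symbols are orthogonal for the pairing `⟨ω, ω'⟩ = ∑ ω_ab ω'_ab`, each
symbol having square norm 4, and they have opposite duality: `½ ε_efgh η^i_gh = η^i_ef` while
`½ ε_efgh η̄^i_gh = -η̄^i_ef`. Writing `R_ab··` in the basis `η^j, η̄^j` of 2-forms, the contraction
with `ε` therefore just flips the sign of the `f₊₋` and `f₋₋` blocks, and pairing `R` with this flipped
copy gives `2 · 16` times the signed sum of squares.
-/

noncomputable section

open Matrix

/-- Three-index Levi-Civita symbol on `Fin 3` (ε₁₂₃ = 1, zero-indexed as ε₀₁₂ = 1). -/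
def eps3 (i j k : Fin 3) : ℝ :=
  ((j : ℝ) - (i : ℝ)) * ((k : ℝ) - (i : ℝ)) * ((k : ℝ) - (j : ℝ)) / 2

/-- Four-index Levi-Civita symbol on `Fin 4` (ε₁₂₃₄ = 1, zero-indexed as ε₀₁₂₃ = 1). -/
def eps4 (a b c d : Fin 4) : ℝ :=
  ((b : ℝ) - (a : ℝ)) * ((c : ℝ) - (a : ℝ)) * ((d : ℝ) - (a : ℝ)) *
    ((c : ℝ) - (b : ℝ)) * ((d : ℝ) - (b : ℝ)) * ((d : ℝ) - (c : ℝ)) / 12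

/-- 't Hooft symbol η^i_{ab}: η^i_{jk} = ε_{ijk}, η^i_{j4} = δ_{ij}, η^i_{4j} = -δ_{ij},
η^i_{44} = 0 (the index `4` of the paper is the index `3 : Fin 4` here). -/
def tHooft (i : Fin 3) (a b : Fin 4) : ℝ :=
  if ha : (a : ℕ) < 3 then
    if hb : (b : ℕ) < 3 then eps3 i ⟨a, ha⟩ ⟨b, hb⟩
    else if (a : ℕ) = (i : ℕ) then 1 else 0
  else
    if (b : ℕ) < 3 then (if (b : ℕ) = (i : ℕ) then -1 else 0)
    else 0

/-- 't Hooft symbol η̄^i_{ab}: η̄^i_{jk} = ε_{ijk}, η̄^i_{j4} = -δ_{ij}, η̄^i_{4j} = δ_{ij},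
η̄^i_{44} = 0. -/
def tHooftBar (i : Fin 3) (a b : Fin 4) : ℝ :=
  if ha : (a : ℕ) < 3 then
    if hb : (b : ℕ) < 3 then eps3 i ⟨a, ha⟩ ⟨b, hb⟩
    else if (a : ℕ) = (i : ℕ) then -1 else 0
  else
    if (b : ℕ) < 3 then (if (b : ℕ) = (i : ℕ) then 1 else 0)
    else 0

/-- The curvature-type tensor built from 3×3 matrices f₊₊, f₊₋, f₋₊, f₋₋ via the
't Hooft symbols. -/
def Riem (fpp fpm fmp fmm : Matrix (Fin 3) (Fin 3) ℝ) (a b c d : Fin 4) : ℝ :=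
  ∑ i : Fin 3, ∑ j : Fin 3,
    (fpp i j * tHooft i a b * tHooft j c d
      + fpm i j * tHooft i a b * tHooftBar j c d
      + fmp i j * tHooftBar i a b * tHooft j c d
      + fmm i j * tHooftBar i a b * tHooftBar j c d)

open Finset

lemma sum_tHooft_mul_tHooft (i k : Fin 3) :
    ∑ a : Fin 4, ∑ b : Fin 4, tHooft i a b * tHooft k a b = if i = k then 4 else 0 := by
  fin_cases i <;> fin_cases k <;> simp [Fin.sum_univ_four, tHooft, eps3] <;> norm_num

lemma sum_tHooftBar_mul_tHooftBar (i k : Fin 3) :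
    ∑ a : Fin 4, ∑ b : Fin 4, tHooftBar i a b * tHooftBar k a b = if i = k then 4 else 0 := by
  fin_cases i <;> fin_cases k <;> simp [Fin.sum_univ_four, tHooftBar, eps3] <;> norm_num

lemma sum_tHooft_mul_tHooftBar (i k : Fin 3) :
    ∑ a : Fin 4, ∑ b : Fin 4, tHooft i a b * tHooftBar k a b = 0 := by
  fin_cases i <;> fin_cases k <;> simp [Fin.sum_univ_four, tHooft, tHooftBar, eps3] <;> norm_num

lemma sum_eps4_mul_tHooft (i : Fin 3) (e f : Fin 4) :
    ∑ g : Fin 4, ∑ h : Fin 4, eps4 e f g h * tHooft i g h = 2 * tHooft i e f := by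
  fin_cases i <;> fin_cases e <;> fin_cases f <;>
    simp [Fin.sum_univ_four, tHooft, eps3, eps4] <;> norm_num

lemma sum_eps4_mul_tHooftBar (i : Fin 3) (e f : Fin 4) :
    ∑ g : Fin 4, ∑ h : Fin 4, eps4 e f g h * tHooftBar i g h = -2 * tHooftBar i e f := by
  fin_cases i <;> fin_cases e <;> fin_cases f <;>
    simp [Fin.sum_univ_four, tHooftBar, eps3, eps4] <;> norm_num

lemma sum_sum_lincomb_mul_lincomb {R ι κ α β : Type*} [CommSemiring R] [Fintype ι] [Fintype κ]
    [Fintype α] [Fintype β] (u : ι → R) (w : κ → R) (X : ι → α → β → R) (Y : κ → α → β → R) :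
    ∑ a, ∑ b, (∑ i, u i * X i a b) * (∑ k, w k * Y k a b)
      = ∑ i, ∑ k, u i * w k * ∑ a, ∑ b, X i a b * Y k a b := by
  simp only [sum_mul_sum]
  simp only [mul_sum]
  rw [sum_comm_cycle]
  refine sum_congr rfl fun i _ => ?_
  rw [sum_comm_cycle]
  exact sum_congr rfl fun _ _ => sum_congr rfl fun _ _ => sum_congr rfl fun _ _ => by ring

def tHooftForm (u v : Fin 3 → ℝ) (a b : Fin 4) : ℝ :=
  ∑ i, (u i * tHooft i a b + v i * tHooftBar i a b)

lemma tHooftForm_neg (u v : Fin 3 → ℝ) (a b : Fin 4) :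
    tHooftForm (-u) (-v) a b = -tHooftForm u v a b := by
  simp only [tHooftForm, Pi.neg_apply, ← sum_neg_distrib]
  exact sum_congr rfl fun i _ => by ring

lemma sum_tHooftForm_mul_tHooftForm (u v u' v' : Fin 3 → ℝ) :
    ∑ a : Fin 4, ∑ b : Fin 4, tHooftForm u v a b * tHooftForm u' v' a b
      = 4 * (u ⬝ᵥ u' + v ⬝ᵥ v') := by
  have expand : ∀ a b, tHooftForm u v a b * tHooftForm u' v' a b
      = (∑ i, u i * tHooft i a b) * (∑ k, u' k * tHooft k a b)
        + (∑ i, u i * tHooft i a b) * (∑ k, v' k * tHooftBar k a b)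
        + (∑ k, u' k * tHooft k a b) * (∑ i, v i * tHooftBar i a b)
        + (∑ i, v i * tHooftBar i a b) * (∑ k, v' k * tHooftBar k a b) := fun a b => by
    rw [tHooftForm, tHooftForm, sum_add_distrib, sum_add_distrib]
    ring
  simp only [expand, sum_add_distrib, sum_sum_lincomb_mul_lincomb, sum_tHooft_mul_tHooft,
    sum_tHooft_mul_tHooftBar, sum_tHooftBar_mul_tHooftBar]
  simp [dotProduct, mul_add, ← sum_mul, mul_comm]

lemma sum_eps4_mul_tHooftForm (u v : Fin 3 → ℝ) (e f : Fin 4) :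
    ∑ g : Fin 4, ∑ h : Fin 4, eps4 e f g h * tHooftForm u v g h = 2 * tHooftForm u (-v) e f := by
  simp only [tHooftForm, mul_sum]
  rw [sum_comm_cycle]
  refine sum_congr rfl fun i _ => ?_
  simp only [mul_add, sum_add_distrib, mul_left_comm (eps4 e f _ _), ← mul_sum,
    sum_eps4_mul_tHooft, sum_eps4_mul_tHooftBar, Pi.neg_apply]
  ring

lemma Riem_eq_tHooftForm (G1 G2 G3 G4 : Matrix (Fin 3) (Fin 3) ℝ) (a b c d : Fin 4) :
    Riem G1 G2 G3 G4 a b c d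
      = tHooftForm (fun j => tHooftForm (G1ᵀ j) (G3ᵀ j) a b)
          (fun j => tHooftForm (G2ᵀ j) (G4ᵀ j) a b) c d := by
  simp only [Riem, tHooftForm, transpose_apply, sum_mul, ← sum_add_distrib]
  rw [sum_comm]
  exact sum_congr rfl fun j _ => sum_congr rfl fun i _ => by ring

lemma sum_eps4_mul_Riem (G1 G2 G3 G4 : Matrix (Fin 3) (Fin 3) ℝ) (a b e f : Fin 4) :
    ∑ g : Fin 4, ∑ h : Fin 4, eps4 e f g h * Riem G1 G2 G3 G4 a b g h
      = 2 * Riem G1 (-G2) G3 (-G4) a b e f := by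
  simp only [Riem_eq_tHooftForm, sum_eps4_mul_tHooftForm, transpose_neg]
  congr 2
  funext j
  exact (tHooftForm_neg _ _ a b).symm

lemma sum_Riem_mul_Riem (G1 G2 G3 G4 H1 H2 H3 H4 : Matrix (Fin 3) (Fin 3) ℝ) :
    ∑ a : Fin 4, ∑ b : Fin 4, ∑ c : Fin 4, ∑ d : Fin 4,
      Riem G1 G2 G3 G4 a b c d * Riem H1 H2 H3 H4 a b c d
    = 16 * ((∑ i, ∑ j, G1 i j * H1 i j) + (∑ i, ∑ j, G2 i j * H2 i j)
        + (∑ i, ∑ j, G3 i j * H3 i j) + (∑ i, ∑ j, G4 i j * H4 i j)) := by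
  simp only [Riem_eq_tHooftForm, sum_tHooftForm_mul_tHooftForm, dotProduct, ← mul_sum,
    sum_add_distrib]
  rw [sum_comm_cycle, sum_comm_cycle (f := fun a b j => tHooftForm (G2ᵀ j) (G4ᵀ j) a b * _)]
  simp only [sum_tHooftForm_mul_tHooftForm, dotProduct, transpose_apply, ← mul_sum,
    sum_add_distrib]
  rw [sum_comm (f := fun j i => G1 i j * H1 i j), sum_comm (f := fun j i => G2 i j * H2 i j),
    sum_comm (f := fun j i => G3 i j * H3 i j), sum_comm (f := fun j i => G4 i j * H4 i j)]
  ring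

/-- Signature-density contraction:
Σ ε_{efgh} R_{abef} R_{abgh} = 32 (‖f₊₊‖² + ‖f₋₊‖² − ‖f₊₋‖² − ‖f₋₋‖²); in particular,
if f₊₋ = f₋₊ᵀ it equals 32 (‖f₊₊‖² − ‖f₋₋‖²). -/
theorem signature_density_contraction (fpp fpm fmp fmm : Matrix (Fin 3) (Fin 3) ℝ) :
    (∑ a : Fin 4, ∑ b : Fin 4, ∑ e : Fin 4, ∑ f : Fin 4, ∑ g : Fin 4, ∑ h : Fin 4,
      eps4 e f g h * Riem fpp fpm fmp fmm a b e f * Riem fpp fpm fmp fmm a b g h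
    = 32 * ((∑ i : Fin 3, ∑ j : Fin 3, (fpp i j) ^ 2)
        + (∑ i : Fin 3, ∑ j : Fin 3, (fmp i j) ^ 2)
        - (∑ i : Fin 3, ∑ j : Fin 3, (fpm i j) ^ 2)
        - (∑ i : Fin 3, ∑ j : Fin 3, (fmm i j) ^ 2)))
    ∧ (fpm = fmpᵀ →
      ∑ a : Fin 4, ∑ b : Fin 4, ∑ e : Fin 4, ∑ f : Fin 4, ∑ g : Fin 4, ∑ h : Fin 4,
        eps4 e f g h * Riem fpp fpm fmp fmm a b e f * Riem fpp fpm fmp fmm a b g h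
      = 32 * ((∑ i : Fin 3, ∑ j : Fin 3, (fpp i j) ^ 2)
          - (∑ i : Fin 3, ∑ j : Fin 3, (fmm i j) ^ 2))) := by
  have contraction : ∑ a : Fin 4, ∑ b : Fin 4, ∑ e : Fin 4, ∑ f : Fin 4, ∑ g : Fin 4, ∑ h : Fin 4,
      eps4 e f g h * Riem fpp fpm fmp fmm a b e f * Riem fpp fpm fmp fmm a b g h
      = ∑ a : Fin 4, ∑ b : Fin 4, ∑ e : Fin 4, ∑ f : Fin 4,
          Riem fpp fpm fmp fmm a b e f * (2 * Riem fpp (-fpm) fmp (-fmm) a b e f) := by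
    simp only [← sum_eps4_mul_Riem, mul_sum, mul_assoc, mul_left_comm (eps4 _ _ _ _)]
  simp only [contraction, mul_left_comm _ (2 : ℝ), ← mul_sum, sum_Riem_mul_Riem,
    Matrix.neg_apply, mul_neg, sum_neg_distrib, ← sq]
  refine ⟨by ring, fun hfpm => ?_⟩
  rw [hfpm]
  simp only [transpose_apply]
  rw [sum_comm (f := fun i j => fmp j i ^ 2)]
  ring
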